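/- Let A and B be commutative rings. If the direct product ring A × B is perinormal, then A is perinormal. -/

import Mathlib

/-- Going down for a ring homomorphism. -/
def GoingDown {R S : Type*} [CommRing R] [CommRing S] (f : R →+* S) : Prop :=
  ∀ (P₁ P₂ : Ideal R), P₁.IsPrime → P₂.IsPrime → P₁ ≤ P₂ →
    ∀ Q₂ : Ideal S, Q₂.IsPrime → Q₂.comap f = P₂ →
      ∃ Q₁ : Ideal S, Q₁.IsPrime ∧ Q₁ ≤ Q₂ ∧ Q₁.comap f = P₁

/-- A ring is perinormal if every going-down overring is flat. -/
def Perinormal (A : Type*) [CommRing A] : Prop :=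
  ∀ B : Subalgebra A (Localization (nonZeroDivisors A)),
    GoingDown (algebraMap A B) → Module.Flat A B

/-!
The total quotient ring of `A × B` is `K(A) × K(B)`, so every overring `C` of `A` gives the
overring `C × B` of `A × B`. Going down for `A → C` yields going down for `A × B → C × B`, so
`C × B` is flat over `A × B` by perinormality. Flatness then descends to `A → C`: composing with
the projection `C × B → C` gives `A × B → A → C`, and `A` is the localization of `A × B` away from
the idempotent `(1, 0)`.
-/

namespace GoingDown

variable {R S T : Type*} [CommRing R] [CommRing S] [CommRing T]

theorem comp {f : R →+* S} {g : S →+* T} (hf : GoingDown f) (hg : GoingDown g) :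
    GoingDown (g.comp f) := by
  intro P₁ P₂ hP₁ hP₂ hle Q₂ hQ₂ hQP
  obtain ⟨Q₁', hQ₁', hQ₁'Q₂, rfl⟩ :=
    hf P₁ P₂ hP₁ hP₂ hle (Q₂.comap g) (hQ₂.comap g) (by rwa [Ideal.comap_comap])
  obtain ⟨Q₁, hQ₁, hQ₁Q₂, rfl⟩ :=
    hg Q₁' (Q₂.comap g) hQ₁' (hQ₂.comap g) hQ₁'Q₂ Q₂ hQ₂ rfl
  exact ⟨Q₁, hQ₁, hQ₁Q₂, Ideal.comap_comap f g⟩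

theorem of_bijective {f : R →+* S} (hf : Function.Bijective f) : GoingDown f := by
  intro P₁ P₂ hP₁ _ hle Q₂ _ hQP
  refine ⟨P₁.map f, Ideal.map_isPrime_of_surjective hf.2 ?_, ?_,
    Ideal.comap_map_of_bijective f hf⟩
  · rw [(RingHom.injective_iff_ker_eq_bot f).mp hf.1]
    exact bot_le
  · rw [← Ideal.map_comap_of_surjective f hf.2 Q₂, hQP]
    exact Ideal.map_mono hle

end GoingDown

theorem RingHom.Flat.of_comp_of_isLocalization {R S T : Type*} [CommRing R] [CommRing S]
    [CommRing T] [Algebra R S] (M : Submonoid R) [IsLocalization M S] {g : S →+* T}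
    (h : (g.comp (algebraMap R S)).Flat) : g.Flat := by
  algebraize [g, g.comp (algebraMap R S)]
  exact (Module.flat_iff_of_isLocalization S M T).mpr h

section Prod

variable {R R' S S' : Type*} [CommRing R] [CommRing R'] [CommRing S] [CommRing S']

theorem Ideal.prod_le_prod_iff {I I' : Ideal R} {J J' : Ideal R'} :
    I.prod J ≤ I'.prod J' ↔ I ≤ I' ∧ J ≤ J' := by
  simpa only [Ideal.idealProdEquiv_symm_apply, Prod.mk_le_mk] using
    Ideal.idealProdEquiv.symm.le_iff_le (x := (I, J)) (y := (I', J'))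

@[simp]
theorem Ideal.comap_prodMap_prod (f : R →+* S) (g : R' →+* S') (I : Ideal S) (J : Ideal S') :
    (I.prod J).comap (f.prodMap g) = (I.comap f).prod (J.comap g) :=
  rfl

theorem GoingDown.prodMap {f : R →+* S} {g : R' →+* S'} (hf : GoingDown f) (hg : GoingDown g) :
    GoingDown (f.prodMap g) := by
  intro P₁ P₂ hP₁ hP₂ hle Q₂ hQ₂ hQP
  subst hQP
  rcases (Ideal.ideal_prod_prime Q₂).mp hQ₂ with ⟨q, hq, rfl⟩ | ⟨q, hq, rfl⟩ <;>
  rcases (Ideal.ideal_prod_prime P₁).mp hP₁ with ⟨p, hp, rfl⟩ | ⟨p, hp, rfl⟩ <;>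
  simp only [Ideal.comap_prodMap_prod, Ideal.comap_top, Ideal.prod_le_prod_iff, top_le_iff,
    le_top, and_true, true_and] at hle
  · obtain ⟨q₁, hq₁, hq₁q, rfl⟩ := hf p _ hp (hq.comap f) hle q hq rfl
    exact ⟨q₁.prod ⊤, Ideal.isPrime_ideal_prod_top, Ideal.prod_mono_left hq₁q, by simp⟩
  · exact absurd hle (hq.comap f).ne_top
  · exact absurd hle (hq.comap g).ne_top
  · obtain ⟨q₁, hq₁, hq₁q, rfl⟩ := hg p _ hp (hq.comap g) hle q hq rfl
    exact ⟨(⊤ : Ideal S).prod q₁, Ideal.isPrime_ideal_prod_top', Ideal.prod_mono_right hq₁q,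
      by simp⟩

theorem RingHom.Flat.fst : (RingHom.fst R R').Flat := by
  algebraize [RingHom.fst R R']
  exact IsLocalization.flat R (Submonoid.powers ((1, 0) : R × R'))

theorem RingHom.Flat.of_prodMap {f : R →+* S} {g : R' →+* S'} (h : (f.prodMap g).Flat) :
    f.Flat := by
  have hfst : ((RingHom.fst S S').comp (f.prodMap g)).Flat := h.comp RingHom.Flat.fst
  algebraize [RingHom.fst R R']
  exact .of_comp_of_isLocalization (Submonoid.powers ((1, 0) : R × R')) hfst

end Prod

section ProdLocalization

variable {R R' S S' : Type*} [CommRing R] [CommRing R'] [CommRing S] [CommRing S']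
  [Algebra R S] [Algebra R' S']

theorem nonZeroDivisors_prod :
    nonZeroDivisors (R × R') = (nonZeroDivisors R).prod (nonZeroDivisors R') := by
  ext ⟨a, b⟩
  simp [← isRegular_iff_mem_nonZeroDivisors, Submonoid.mem_prod]

-- Only a local instance: on `R × R'` over itself it would compete with `Algebra.id`.
abbrev Prod.algebraProdMap : Algebra (R × R') (S × S') :=
  ((algebraMap R S).prodMap (algebraMap R' S')).toAlgebra

attribute [local instance] Prod.algebraProdMap

theorem IsLocalization.prod (M : Submonoid R) (N : Submonoid R') [IsLocalization M S]
    [IsLocalization N S'] : IsLocalization (M.prod N) (S × S') where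
  map_units := by
    rintro ⟨⟨m, n⟩, hm, hn⟩
    exact Prod.isUnit_iff.mpr ⟨map_units S ⟨m, hm⟩, map_units S' ⟨n, hn⟩⟩
  surj := by
    rintro ⟨x, x'⟩
    obtain ⟨⟨a, s⟩, hx⟩ := surj M x
    obtain ⟨⟨a', s'⟩, hx'⟩ := surj N x'
    exact ⟨((a, a'), ⟨(s, s'), s.2, s'.2⟩), Prod.ext hx hx'⟩
  exists_of_eq := by
    rintro ⟨a, a'⟩ ⟨b, b'⟩ h
    obtain ⟨c, hc⟩ := exists_of_eq (M := M) (S := S) (congrArg Prod.fst h)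
    obtain ⟨c', hc'⟩ := exists_of_eq (M := N) (S := S') (congrArg Prod.snd h)
    exact ⟨⟨(c, c'), c.2, c'.2⟩, Prod.ext hc hc'⟩

theorem IsFractionRing.prod [IsFractionRing R S] [IsFractionRing R' S'] :
    IsFractionRing (R × R') (S × S') := by
  rw [IsFractionRing, nonZeroDivisors_prod]
  exact IsLocalization.prod _ _

end ProdLocalization

attribute [local instance] Prod.algebraProdMap IsFractionRing.prod

noncomputable def prodOverringHom {A : Type*} [CommRing A] (C : Subalgebra A (FractionRing A))
    (B : Type*) [CommRing B] : C × B →ₐ[A × B] FractionRing (A × B) :=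
  (IsLocalization.algEquiv (nonZeroDivisors (A × B)) _
    (FractionRing A × FractionRing B)).symm.toAlgHom.comp
      { (C.val : C →+* FractionRing A).prodMap (algebraMap B (FractionRing B)) with
        commutes' := fun _ => rfl }

theorem prodOverringHom_injective {A : Type*} [CommRing A] (C : Subalgebra A (FractionRing A))
    (B : Type*) [CommRing B] : Function.Injective (prodOverringHom C B) := by
  rw [prodOverringHom, AlgHom.coe_comp]
  exact (AlgEquiv.injective _).comp
    (Subtype.val_injective.prodMap (IsFractionRing.injective B (FractionRing B)))

theorem statement7 (A B : Type*) [CommRing A] [CommRing B]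
    (h : Perinormal (A × B)) : Perinormal A := by
  intro C hC
  let E := AlgEquiv.ofInjective _ (prodOverringHom_injective C B)
  have hfactor : algebraMap (A × B) (prodOverringHom C B).range =
      (E : C × B →+* _).comp (algebraMap (A × B) (C × B)) :=
    RingHom.ext fun x => (E.commutes x).symm
  have hGD : GoingDown (algebraMap (A × B) (prodOverringHom C B).range) :=
    hfactor ▸ (hC.prodMap (.of_bijective Function.bijective_id)).comp (.of_bijective E.bijective)
  have hflat : (algebraMap (A × B) (C × B)).Flat :=
    (RingHom.Flat.comp_iff_of_bijective_left E.bijective).mp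
      (hfactor ▸ RingHom.flat_algebraMap_iff.mpr (h _ hGD))
  exact RingHom.flat_algebraMap_iff.mp (RingHom.Flat.of_prodMap (g := RingHom.id B) hflat)
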